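/- Let 𝒢 be the Sprague–Grundy function of i-MARK({1,3},{2,3}). For every n ≥ 6: if n mod 6 ∈ {0, 2, 4} then 𝒢(n) ≠ 0, and if n mod 6 ∈ {1, 5} then 𝒢(n) = 0. (That is, starting from position 6 the Grundy sequence has the form (N, 0, N, ?, N, 0) repeated forever, where N denotes a nonzero value and ? an arbitrary value.) -/

import Mathlib

/-- The minimum excludant of a set of naturals. -/
noncomputable def mex (T : Set ℕ) : ℕ := sInf {k : ℕ | k ∉ T}

/-- The set of followers of position `n` in the game i-MARK(S,D):
`n - s` for `s ∈ S` with `0 < s ≤ n`, and `n / d` for `d ∈ D` with `2 ≤ d`, `0 < n`, `d ∣ n`. -/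
def followers (S D : Finset ℕ) (n : ℕ) : Finset ℕ :=
  ((S.filter fun s => 0 < s ∧ s ≤ n).image fun s => n - s) ∪
  ((D.filter fun d => 2 ≤ d ∧ 0 < n ∧ d ∣ n).image fun d => n / d)

theorem followers_lt {S D : Finset ℕ} {n m : ℕ} (h : m ∈ followers S D n) : m < n := by
  simp only [followers, Finset.mem_union, Finset.mem_image, Finset.mem_filter] at h
  rcases h with ⟨s, ⟨-, hs, hsn⟩, rfl⟩ | ⟨d, ⟨-, hd, hn, -⟩, rfl⟩
  · omega
  · exact Nat.div_lt_self hn (by omega)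

/-- The Sprague–Grundy function of i-MARK(S,D). -/
noncomputable def grundy (S D : Finset ℕ) : ℕ → ℕ
  | n => mex ↑((followers S D n).attach.image fun m => grundy S D m.1)
decreasing_by exact followers_lt m.2

/-- The number of followers of position `n` in i-MARK(S,D) (for positive `S` and `D` with
elements `≥ 2`): `φ(0) = 0` and `φ(n) = #{s ∈ S : s ≤ n} + #{d ∈ D : d ∣ n}` for `n > 0`. -/
def numFollowers (S D : Finset ℕ) (n : ℕ) : ℕ :=
  if n = 0 then 0 else (S.filter fun s => s ≤ n).card + (D.filter fun d => d ∣ n).card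

/-- `σ : ℕ → ℕ` is a guess seed for starting position `n` in i-MARK(S,D) if
`σ i ≤ φ(i)` for all `n ≤ i < n + max S` (values of `σ` outside this window are irrelevant). -/
def IsGuessSeed (S D : Finset ℕ) (n : ℕ) (σ : ℕ → ℕ) : Prop :=
  ∀ i, n ≤ i → i < n + S.sup id → σ i ≤ numFollowers S D i

/-- The guess sequence generated by seed `σ` from starting position `n`: it equals `σ` on
`[n, n + max S)`, and from `n + max S` on it is computed by the mex rule, using guessed values
for subtraction followers and true Grundy values for division followers. -/
noncomputable def guessSeq (S D : Finset ℕ) (n : ℕ) (σ : ℕ → ℕ) : ℕ → ℕ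
  | m =>
    if m < n + S.sup id then σ m
    else
      mex ((↑((S.filter fun t => 0 < t ∧ t ≤ m).attach.image
              fun t => guessSeq S D n σ (m - t.1)) : Set ℕ) ∪
        {g | ∃ d ∈ D, 2 ≤ d ∧ 0 < m ∧ d ∣ m ∧ g = grundy S D (m / d)})
decreasing_by
  have ht := t.2
  simp only [Finset.mem_filter] at ht
  omega

/-- Convergence occurs in `c` steps at starting position `n`: any two guess sequences from `n`
agree on all positions `m` with `n + c ≤ m < n + c + max S`. -/
def ConvergesIn (S D : Finset ℕ) (n c : ℕ) : Prop :=
  ∀ σ σ' : ℕ → ℕ, IsGuessSeed S D n σ → IsGuessSeed S D n σ' →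
    ∀ m, n + c ≤ m → m < n + c + S.sup id → guessSeq S D n σ m = guessSeq S D n σ' m

/-! A position has Grundy value `0` exactly when no follower does. A position `n ≥ 7` coprime
to `6` has only the followers `n - 1` and `n - 3`, both even; an even position `n ≥ 4` has a
follower of value `0`: `n - 1` if `n ≡ 0, 2 (mod 6)`, `n - 3` if `n ≡ 4 (mod 6)`, and the
P-position `2 = 4 / 2 = 6 / 3` in the two cases `n = 4, 6` not yet covered. Hence both claims
hold by a simultaneous strong induction. -/

lemma mex_eq_zero_iff {T : Set ℕ} (hT : T.Finite) : mex T = 0 ↔ 0 ∉ T := by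
  rw [mex, Nat.sInf_eq_zero]
  exact or_iff_left (hT.infinite_compl.nonempty.ne_empty : {k | k ∉ T} ≠ ∅)

lemma grundy_eq_zero_iff {S D : Finset ℕ} {n : ℕ} :
    grundy S D n = 0 ↔ ∀ m ∈ followers S D n, grundy S D m ≠ 0 := by
  rw [grundy, mex_eq_zero_iff (Finset.finite_toSet _)]
  simp

lemma grundy_ne_zero_iff {S D : Finset ℕ} {n : ℕ} :
    grundy S D n ≠ 0 ↔ ∃ m ∈ followers S D n, grundy S D m = 0 := by
  rw [Ne, grundy_eq_zero_iff]
  push Not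
  rfl

lemma mem_followers_13_23 {n m : ℕ} :
    m ∈ followers {1, 3} {2, 3} n ↔
      (1 ≤ n ∧ m = n - 1) ∨ (3 ≤ n ∧ m = n - 3) ∨
      (0 < n ∧ 2 ∣ n ∧ m = n / 2) ∨ (0 < n ∧ 3 ∣ n ∧ m = n / 3) := by
  simp [followers, or_and_right, exists_or, eq_comm, and_assoc, or_assoc]

lemma grundy_13_23_zero : grundy {1, 3} {2, 3} 0 = 0 :=
  grundy_eq_zero_iff.2 fun m hm => by rw [mem_followers_13_23] at hm; omega

lemma grundy_13_23_one_ne_zero : grundy {1, 3} {2, 3} 1 ≠ 0 :=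
  grundy_ne_zero_iff.2 ⟨0, mem_followers_13_23.2 (by omega), grundy_13_23_zero⟩

lemma grundy_13_23_two : grundy {1, 3} {2, 3} 2 = 0 :=
  grundy_eq_zero_iff.2 fun m hm => by
    obtain rfl : m = 1 := by rw [mem_followers_13_23] at hm; omega
    exact grundy_13_23_one_ne_zero

theorem grundy_13_23_ne_zero_of_even_and_eq_zero_of_coprime_six (n : ℕ) :
    (4 ≤ n → 2 ∣ n → grundy {1, 3} {2, 3} n ≠ 0) ∧
    (7 ≤ n → ¬2 ∣ n → ¬3 ∣ n → grundy {1, 3} {2, 3} n = 0) := by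
  induction n using Nat.strong_induction_on with
  | _ n ih =>
  refine ⟨fun h4 h2 => grundy_ne_zero_iff.2 ?_, fun h7 h2 h3 => grundy_eq_zero_iff.2 ?_⟩
  · by_cases hsmall : n = 4 ∨ n = 6
    · exact ⟨2, mem_followers_13_23.2 (by omega), grundy_13_23_two⟩
    by_cases hmod : n % 3 = 1
    · exact ⟨n - 3, mem_followers_13_23.2 (by omega),
        (ih (n - 3) (by omega)).2 (by omega) (by omega) (by omega)⟩
    · exact ⟨n - 1, mem_followers_13_23.2 (by omega),
        (ih (n - 1) (by omega)).2 (by omega) (by omega) (by omega)⟩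
  · intro m hm
    rw [mem_followers_13_23] at hm
    exact (ih m (by omega)).1 (by omega) (by omega)

/-- In i-MARK({1,3},{2,3}), from position 6 on the Grundy sequence has the form
`(N, 0, N, ?, N, 0)` repeated: positions `≡ 0, 2, 4 (mod 6)` have nonzero Grundy value and
positions `≡ 1, 5 (mod 6)` have Grundy value 0. -/
theorem imark_13_23_grundy_pattern (n : ℕ) (hn : 6 ≤ n) :
    ((n % 6 = 0 ∨ n % 6 = 2 ∨ n % 6 = 4) → grundy {1, 3} {2, 3} n ≠ 0) ∧
    ((n % 6 = 1 ∨ n % 6 = 5) → grundy {1, 3} {2, 3} n = 0) := by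
  obtain ⟨hEven, hCoprime⟩ := grundy_13_23_ne_zero_of_even_and_eq_zero_of_coprime_six n
  exact ⟨fun h => hEven (by omega) (by omega),
    fun h => hCoprime (by omega) (by omega) (by omega)⟩
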